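/- Let t ≥ 2 and q ≥ 2 be integers, let G be a finite t-broom-free graph, and let V_1, …, V_q be pairwise disjoint nonempty independent sets in G with |V_q| = t such that Q := G[V_1 ∪ ⋯ ∪ V_q] is a complete q-partite graph with parts V_1, …, V_q. Let W = {v ∈ N(V(Q)) : v is anticomplete to V_q}. Then W is anticomplete to N^2(V(Q)); that is, no vertex of W has a neighbor at distance exactly 2 from V(Q). -/

import Mathlib

open SimpleGraph

/-- The `t`-broom: `K_{1,t+1}` with one edge subdivided once.
Vertex `0` is `u₀`, vertex `1` is `v₁`, vertex `2` is `v₂`,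
and vertices `3, …, t+2` are `u₁, …, u_t`. -/
def tBroom (t : ℕ) : SimpleGraph (Fin (t + 3)) :=
  SimpleGraph.fromRel (fun a b =>
    (a = 0 ∧ b = 1) ∨ (a = 1 ∧ b = 2) ∨ (a = 0 ∧ 3 ≤ b.val))

/-- `G` is `H`-free: no induced subgraph of `G` is isomorphic to `H`.
(A graph embedding `H ↪g G` is exactly an isomorphism of `H` onto an induced subgraph of `G`.) -/
def Free {V W : Type*} (G : SimpleGraph V) (H : SimpleGraph W) : Prop :=
  ¬ Nonempty (H ↪g G)

/-- The neighborhood `N(S)` of a set `S`: vertices outside `S` with a neighbor in `S`. -/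
def nbhd {V : Type*} (G : SimpleGraph V) (S : Set V) : Set V :=
  {v | v ∉ S ∧ ∃ u ∈ S, G.Adj u v}

/-- `v` is complete to `S`: adjacent to every vertex of `S`. -/
def CompleteTo {V : Type*} (G : SimpleGraph V) (v : V) (S : Set V) : Prop :=
  ∀ u ∈ S, G.Adj v u

/-- `v` is anticomplete to `S`: adjacent to no vertex of `S`. -/
def AnticompleteTo {V : Type*} (G : SimpleGraph V) (v : V) (S : Set V) : Prop :=
  ∀ u ∈ S, ¬ G.Adj v u

/-- `v` is neutral to `S`: neither complete nor anticomplete to `S`. -/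
def NeutralTo {V : Type*} (G : SimpleGraph V) (v : V) (S : Set V) : Prop :=
  ¬ CompleteTo G v S ∧ ¬ AnticompleteTo G v S

/-- `S` is an independent set of size `s` in `G`. -/
def IsNIndepSet' {V : Type*} (G : SimpleGraph V) (s : ℕ) (S : Finset V) : Prop :=
  S.card = s ∧ ∀ u ∈ S, ∀ v ∈ S, u ≠ v → ¬ G.Adj u v

/-- `R` has the Ramsey property for `(s, n)`: every finite simple graph on at least `R`
vertices contains an independent set of size `s` or a clique of size `n`. -/
def RamseyProp (R s n : ℕ) : Prop :=
  ∀ (W : Type) [Fintype W] (H : SimpleGraph W), R ≤ Fintype.card W →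
    (∃ S : Finset W, IsNIndepSet' H s S) ∨ (∃ S : Finset W, H.IsNClique n S)

/-- The distance (in `ℕ∞`) from a set `S` to a vertex `v`:
the minimum over `u ∈ S` of the distance from `u` to `v`. -/
noncomputable def eDistSet {V : Type*} (G : SimpleGraph V) (S : Set V) (v : V) : ℕ∞ :=
  ⨅ u ∈ S, G.edist u v

/-- `N^i(S)`: the set of vertices (outside `S`) at distance exactly `i` from `S`. -/
noncomputable def distNbhd {V : Type*} (G : SimpleGraph V) (S : Set V) (i : ℕ) : Set V :=
  {v | v ∉ S ∧ eDistSet G S v = (i : ℕ∞)}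

/-- `N^{≥ i}(S) = ⋃_{j ≥ i} N^j(S)`. -/
noncomputable def distNbhdGe {V : Type*} (G : SimpleGraph V) (S : Set V) (i : ℕ) : Set V :=
  ⋃ j ∈ {j : ℕ | i ≤ j}, distNbhd G S j

/-- Given the union `U = V_1 ∪ ⋯ ∪ V_{q-1}` and the last part `Vq`, the set
`W_I = {v ∈ W : v complete to I, anticomplete to U \ I}`, where
`W = {v ∈ N(U ∪ Vq) : v anticomplete to Vq}`. -/
def Wpart {V : Type*} (G : SimpleGraph V) (U Vq I : Set V) : Set V :=
  {v ∈ nbhd G (U ∪ Vq) | AnticompleteTo G v Vq ∧ CompleteTo G v I ∧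
    AnticompleteTo G v (U \ I)}

theorem exists_injective_fin_of_ncard_eq {α : Type*} {s : Set α} {n : ℕ} (h : s.ncard = n) :
    ∃ e : Fin n → α, Function.Injective e ∧ ∀ k, e k ∈ s := by
  rcases Nat.eq_zero_or_pos n with rfl | hn
  · exact ⟨Fin.elim0, fun a => a.elim0, fun k => k.elim0⟩
  have : Finite s := (Set.finite_of_ncard_pos (h ▸ hn)).to_subtype
  let φ : s ≃ Fin n := (Finite.equivFin s).trans (finCongr (by rw [Nat.card_coe_set_eq, h]))
  exact ⟨fun k => φ.symm k, Subtype.val_injective.comp φ.symm.injective, fun k => (φ.symm k).2⟩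

theorem not_adj_of_mem_distNbhd {V : Type*} {G : SimpleGraph V} {S : Set V} {i : ℕ} (hi : 1 < i)
    {u v : V} (hu : u ∈ S) (hv : v ∈ distNbhd G S i) : ¬ G.Adj u v := fun huv => by
  have h : eDistSet G S v ≤ 1 := (iInf₂_le u hu).trans_eq (G.edist_eq_one_iff_adj.mpr huv)
  rw [hv.2] at h
  exact absurd (by exact_mod_cast h) hi.not_ge

theorem tBroom_adj_iff {t : ℕ} {a b : Fin (t + 3)} :
    (tBroom t).Adj a b ↔ a.val ≠ b.val ∧
      ((a.val = 0 ∧ b.val = 1) ∨ (a.val = 1 ∧ b.val = 2) ∨ (a.val = 0 ∧ 3 ≤ b.val) ∨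
        (b.val = 0 ∧ a.val = 1) ∨ (b.val = 1 ∧ a.val = 2) ∨ (b.val = 0 ∧ 3 ≤ a.val)) := by
  have h1 : ((1 : Fin (t + 3)) : ℕ) = 1 := Nat.mod_eq_of_lt (by omega : 1 < t + 3)
  have h2 : ((2 : Fin (t + 3)) : ℕ) = 2 := Nat.mod_eq_of_lt (by omega : 2 < t + 3)
  simp only [tBroom, fromRel_adj, Fin.ext_iff, Fin.val_zero, h1, h2, ne_eq]
  omega

theorem nonempty_tBroom_embedding {V : Type*} {G : SimpleGraph V} {t : ℕ} {c v₁ v₂ : V}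
    {e : Fin t → V} (he : Function.Injective e) (hc_ne_v₂ : c ≠ v₂) (he_ne_v₁ : ∀ k, e k ≠ v₁)
    (hcv₁ : G.Adj c v₁) (hv₁v₂ : G.Adj v₁ v₂) (hcv₂ : ¬ G.Adj c v₂)
    (hce : ∀ k, G.Adj c (e k)) (hv₁e : ∀ k, ¬ G.Adj v₁ (e k)) (hv₂e : ∀ k, ¬ G.Adj v₂ (e k))
    (hee : ∀ k l, ¬ G.Adj (e k) (e l)) : Nonempty (tBroom t ↪g G) := by
  let f : Fin (t + 3) → V := Fin.cons c (Fin.cons v₁ (Fin.cons v₂ e))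
  have hf : Function.Injective f := by
    simp only [f, Fin.cons_injective_iff, Fin.range_cons, Set.mem_insert_iff, Set.mem_range,
      not_or, not_exists]
    exact ⟨⟨hcv₁.ne, hc_ne_v₂, fun k h => (hce k).ne h.symm⟩, ⟨hv₁v₂.ne, he_ne_v₁⟩,
      fun k h => hv₁e k (h ▸ hv₁v₂), he⟩
  refine ⟨⟨⟨f, hf⟩, fun {a b} => ?_⟩⟩
  change G.Adj (f a) (f b) ↔ _
  -- `simp` turns the third vertex `Fin.succ (Fin.succ 0)` into the numeral `2`
  have hf₂ : f 2 = v₂ := rfl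
  have h₂ : 2 % (t + 3) = 2 := Nat.mod_eq_of_lt (by omega)
  refine Fin.cases ?_ (Fin.cases ?_ (Fin.cases ?_ fun k => ?_)) a <;>
    refine Fin.cases ?_ (Fin.cases ?_ (Fin.cases ?_ fun l => ?_)) b <;>
    simp [f, tBroom_adj_iff, hf₂, h₂, G.adj_comm, hcv₁, hv₁v₂, hcv₂, hce, hv₁e, hv₂e, hee]

theorem W_anticomplete_distTwo_general (t q : ℕ)
    (V : Type) (G : SimpleGraph V) (hfree : _root_.Free G (tBroom t))
    (Vs : Fin (q - 1) → Set V) (Vq : Set V)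
    (hVq : Vq.ncard = t)
    (hindepq : ∀ u ∈ Vq, ∀ w ∈ Vq, ¬ G.Adj u w)
    (hcompq : ∀ i, ∀ u ∈ Vs i, ∀ w ∈ Vq, G.Adj u w) :
    ∀ w ∈ {v ∈ nbhd G ((⋃ i, Vs i) ∪ Vq) | AnticompleteTo G v Vq},
      ∀ y ∈ distNbhd G ((⋃ i, Vs i) ∪ Vq) 2, ¬ G.Adj w y := by
  rintro w ⟨⟨hwQ, x, hxQ, hxw⟩, hwVq⟩ y hy hwy
  have hyQ (u) (hu : u ∈ (⋃ i, Vs i) ∪ Vq) : ¬ G.Adj u y :=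
    not_adj_of_mem_distNbhd one_lt_two hu hy
  obtain ⟨i, hxi⟩ : ∃ i, x ∈ Vs i :=
    hxQ.elim Set.mem_iUnion.mp fun hxVq => absurd hxw.symm (hwVq x hxVq)
  obtain ⟨e, he, heVq⟩ := exists_injective_fin_of_ncard_eq hVq
  -- `x` is the centre, `x - w - y` the subdivided edge and `Vq` the `t` leaves of a `t`-broom
  exact hfree <| nonempty_tBroom_embedding he (fun (hxy : x = y) => hy.1 (hxy ▸ hxQ))
    (fun k (hk : e k = w) => hwQ (Or.inr (hk ▸ heVq k))) hxw hwy (hyQ x hxQ)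
    (fun k => hcompq i x hxi _ (heVq k)) (fun k => hwVq _ (heVq k))
    (fun k hyk => hyQ _ (Or.inr (heVq k)) hyk.symm) (fun k l => hindepq _ (heVq k) _ (heVq l))

/-- part of Claim 4.1. With `Q = G[V_1 ∪ ⋯ ∪ V_q]` complete `q`-partite and
`W = {v ∈ N(V(Q)) : v anticomplete to V_q}`, no vertex of `W` has a neighbor at distance
exactly `2` from `V(Q)`. -/
theorem W_anticomplete_distTwo (t q : ℕ) (ht : 2 ≤ t) (hq : 2 ≤ q)
    (V : Type) [Fintype V] (G : SimpleGraph V) (hfree : _root_.Free G (tBroom t))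
    (Vs : Fin (q - 1) → Set V) (Vq : Set V)
    (hne : ∀ i, (Vs i).Nonempty) (hVq : Vq.ncard = t)
    (hdisj : ∀ i j, i ≠ j → Disjoint (Vs i) (Vs j))
    (hdisjq : ∀ i, Disjoint (Vs i) Vq)
    (hindep : ∀ i, ∀ u ∈ Vs i, ∀ w ∈ Vs i, ¬ G.Adj u w)
    (hindepq : ∀ u ∈ Vq, ∀ w ∈ Vq, ¬ G.Adj u w)
    (hcomp : ∀ i j, i ≠ j → ∀ u ∈ Vs i, ∀ w ∈ Vs j, G.Adj u w)
    (hcompq : ∀ i, ∀ u ∈ Vs i, ∀ w ∈ Vq, G.Adj u w) :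
    ∀ w ∈ {v ∈ nbhd G ((⋃ i, Vs i) ∪ Vq) | AnticompleteTo G v Vq},
      ∀ y ∈ distNbhd G ((⋃ i, Vs i) ∪ Vq) 2, ¬ G.Adj w y :=
  W_anticomplete_distTwo_general t q V G hfree Vs Vq hVq hindepq hcompq
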